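/- arXiv:1004.2930 — 4 statements merged into one kernel-verified Lean document; each statement's English description precedes it below -/
import Mathlib

section
/- Let g₁, g₂ : ℝ → ℝ, let γ ∈ ℝ with g₁(γ) = γ and g₂(γ) = γ, and let r₁, r₂ be positive natural numbers. Suppose there exist nonzero real constants C₁, C₂ such that (g₁(x) − γ)/(x − γ)^{r₁} → C₁ and (g₂(x) − γ)/(x − γ)^{r₂} → C₂ as x → γ with x ≠ γ. Then (g₁(g₂(x)) − γ)/(x − γ)^{r₁·r₂} → C₁·C₂^{r₁} as x → γ with x ≠ γ. In particular, the composite iterative function g₁ ∘ g₂ has convergence order r₁·r₂. -/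
/-!
Since `C₂ ≠ 0` and `r₂ > 0`, the map `g₂` sends a punctured neighbourhood of `γ` into one, so
the quotient for `g₁` may be evaluated at `g₂ x`. For `g₂ x ≠ γ` the quotient for `g₁ ∘ g₂`
factors as `(g₁ (g₂ x) - γ) / (g₂ x - γ) ^ r₁ * ((g₂ x - γ) / (x - γ) ^ r₂) ^ r₁`,
which tends to `C₁ * C₂ ^ r₁`.
-/

open Filter Topology

section ConvergenceOrder

variable {𝕜 : Type*} [NormedField 𝕜] {g : 𝕜 → 𝕜} {γ C : 𝕜} {r : ℕ}

lemma tendsto_sub_nhds_zero_of_tendsto_div_pow (hr : 0 < r)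
    (h : Tendsto (fun x => (g x - γ) / (x - γ) ^ r) (𝓝[≠] γ) (𝓝 C)) :
    Tendsto (fun x => g x - γ) (𝓝[≠] γ) (𝓝 0) := by
  have hpow : Tendsto (fun x => (x - γ) ^ r) (𝓝[≠] γ) (𝓝 0) :=
    tendsto_nhdsWithin_of_tendsto_nhds <|
      ((continuous_id.sub continuous_const).pow r).tendsto' γ 0 (by simp [hr.ne'])
  have hprod := h.mul hpow
  rw [mul_zero] at hprod
  refine hprod.congr' ?_
  filter_upwards [self_mem_nhdsWithin] with x hx
  exact div_mul_cancel₀ _ (pow_ne_zero _ (sub_ne_zero.mpr hx))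

lemma eventually_ne_of_tendsto_div_pow (hC : C ≠ 0)
    (h : Tendsto (fun x => (g x - γ) / (x - γ) ^ r) (𝓝[≠] γ) (𝓝 C)) :
    ∀ᶠ x in 𝓝[≠] γ, g x ≠ γ := by
  filter_upwards [h.eventually_ne hC] with x hx hgx
  simp [hgx] at hx

lemma tendsto_nhdsNE_of_tendsto_div_pow (hr : 0 < r) (hC : C ≠ 0)
    (h : Tendsto (fun x => (g x - γ) / (x - γ) ^ r) (𝓝[≠] γ) (𝓝 C)) :
    Tendsto g (𝓝[≠] γ) (𝓝[≠] γ) :=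
  tendsto_nhdsWithin_iff.mpr
    ⟨by simpa using (tendsto_sub_nhds_zero_of_tendsto_div_pow hr h).add_const γ,
      eventually_ne_of_tendsto_div_pow hC h⟩

end ConvergenceOrder

lemma div_pow_mul_div_pow_pow {K : Type*} [Field K] {b : K} (a c : K) (hb : b ≠ 0) (m n : ℕ) :
    a / b ^ m * (b / c ^ n) ^ m = a / c ^ (m * n) := by
  rw [div_pow, ← pow_mul, mul_comm n m]
  field_simp

theorem stmt_4_general (g₁ g₂ : ℝ → ℝ) (γ : ℝ)
    (r₁ r₂ : ℕ) (hr₂ : 0 < r₂)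
    (C₁ C₂ : ℝ) (hC₂ : C₂ ≠ 0)
    (h₁ : Tendsto (fun x => (g₁ x - γ) / (x - γ) ^ r₁) (𝓝[≠] γ) (𝓝 C₁))
    (h₂ : Tendsto (fun x => (g₂ x - γ) / (x - γ) ^ r₂) (𝓝[≠] γ) (𝓝 C₂)) :
    Tendsto (fun x => (g₁ (g₂ x) - γ) / (x - γ) ^ (r₁ * r₂)) (𝓝[≠] γ)
      (𝓝 (C₁ * C₂ ^ r₁)) := by
  have hfactors := (h₁.comp (tendsto_nhdsNE_of_tendsto_div_pow hr₂ hC₂ h₂)).mul (h₂.pow r₁)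
  refine hfactors.congr' ?_
  filter_upwards [eventually_ne_of_tendsto_div_pow hC₂ h₂] with x hx
  exact div_pow_mul_div_pow_pow _ _ (sub_ne_zero.mpr hx) r₁ r₂

/-- Traub's composition theorem (two-function case): if `g₁` has convergence order
`r₁` with asymptotic error constant `C₁ ≠ 0` at the common fixed point `γ`, and `g₂`
has order `r₂` with constant `C₂ ≠ 0`, then `g₁ ∘ g₂` has order `r₁ * r₂` with
constant `C₁ * C₂ ^ r₁`. -/
theorem stmt_4 (g₁ g₂ : ℝ → ℝ) (γ : ℝ)
    (hg₁ : g₁ γ = γ) (hg₂ : g₂ γ = γ)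
    (r₁ r₂ : ℕ) (hr₁ : 0 < r₁) (hr₂ : 0 < r₂)
    (C₁ C₂ : ℝ) (hC₁ : C₁ ≠ 0) (hC₂ : C₂ ≠ 0)
    (h₁ : Tendsto (fun x => (g₁ x - γ) / (x - γ) ^ r₁) (𝓝[≠] γ) (𝓝 C₁))
    (h₂ : Tendsto (fun x => (g₂ x - γ) / (x - γ) ^ r₂) (𝓝[≠] γ) (𝓝 C₂)) :
    Tendsto (fun x => (g₁ (g₂ x) - γ) / (x - γ) ^ (r₁ * r₂)) (𝓝[≠] γ)
      (𝓝 (C₁ * C₂ ^ r₁)) :=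
  stmt_4_general g₁ g₂ γ r₁ r₂ hr₂ C₁ C₂ hC₂ h₁ h₂
end

section
/- Let f : ℝ → ℝ be twice continuously differentiable on an open interval D containing a point γ with f(γ) = 0 and f'(γ) ≠ 0, and let N(x) = x − f(x)/f'(x) be the Newton iteration map. Then f(N(x))/(x − γ)² → f''(γ)/2 as x → γ with x ≠ γ. -/
open Filter Topology

/-!
Both `f ∘ N` and `(x - γ)²` vanish at `γ`, so L'Hôpital's rule applies. Since
`N' = f f'' / f'²`, the quotient of derivatives is
`f'(N x) f''(x) / (2 f'(x)²) · f(x) / (x - γ)`, and as `x → γ` the first factor tends to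
`f''(γ) / (2 f'(γ))` while the difference quotient `f(x) / (x - γ)` tends to `f'(γ)`.
-/

noncomputable def newtonMap (f : ℝ → ℝ) (x : ℝ) : ℝ := x - f x / deriv f x

section Newton

variable {f : ℝ → ℝ} {x γ f'' : ℝ}

theorem newtonMap_eq_self_of_eq_zero (hf0 : f γ = 0) : newtonMap f γ = γ := by
  simp [newtonMap, hf0]

theorem hasDerivAt_newtonMap (hf : DifferentiableAt ℝ f x)
    (hf' : HasDerivAt (deriv f) f'' x) (hx : deriv f x ≠ 0) :
    HasDerivAt (newtonMap f) (f x * f'' / deriv f x ^ 2) x := by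
  refine ((hasDerivAt_id x).sub (hf.hasDerivAt.div hf' hx)).congr_deriv ?_
  field_simp
  ring

theorem tendsto_newtonMap (hf : ContinuousAt f γ) (hf' : ContinuousAt (deriv f) γ)
    (hf0 : f γ = 0) (hγ : deriv f γ ≠ 0) : Tendsto (newtonMap f) (𝓝 γ) (𝓝 γ) := by
  have hN : ContinuousAt (newtonMap f) γ := continuousAt_id.sub (hf.div hf' hγ)
  simpa only [ContinuousAt, newtonMap_eq_self_of_eq_zero hf0] using hN

theorem tendsto_div_sub_nhdsNE_of_hasDerivAt {a : ℝ} (hf : HasDerivAt f a γ)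
    (hf0 : f γ = 0) : Tendsto (fun x => f x / (x - γ)) (𝓝[≠] γ) (𝓝 a) :=
  (hasDerivAt_iff_tendsto_slope.mp hf).congr fun x => by
    rw [slope_def_field, hf0, sub_zero]

theorem tendsto_comp_newtonMap_div_sq (hf : ∀ᶠ x in 𝓝 γ, DifferentiableAt ℝ f x)
    (hf' : ∀ᶠ x in 𝓝 γ, DifferentiableAt ℝ (deriv f) x)
    (hf'' : ContinuousAt (deriv (deriv f)) γ) (hf0 : f γ = 0) (hγ : deriv f γ ≠ 0) :
    Tendsto (fun x => f (newtonMap f x) / (x - γ) ^ 2) (𝓝[≠] γ)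
      (𝓝 (deriv (deriv f) γ / 2)) := by
  have hfγ : ContinuousAt f γ := hf.self_of_nhds.continuousAt
  have hf'γ : ContinuousAt (deriv f) γ := hf'.self_of_nhds.continuousAt
  have hN := tendsto_newtonMap hfγ hf'γ hf0 hγ
  have hderiv : ∀ᶠ x in 𝓝 γ, HasDerivAt (fun y => f (newtonMap f y))
      (deriv f (newtonMap f x) * (f x * deriv (deriv f) x / deriv f x ^ 2)) x := by
    filter_upwards [hf, hf', hf'γ.eventually_ne hγ, hN.eventually hf] with x hx hx' hx0 hNx
    exact hNx.hasDerivAt.comp x (hasDerivAt_newtonMap hx hx'.hasDerivAt hx0)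
  have hnum : Tendsto (fun x => f (newtonMap f x)) (𝓝 γ) (𝓝 0) := by
    simpa only [hf0, Function.comp_def] using hfγ.tendsto.comp hN
  have hden : Tendsto (fun x : ℝ => (x - γ) ^ 2) (𝓝 γ) (𝓝 0) :=
    Continuous.tendsto' (by fun_prop) γ 0 (by simp)
  have hfactor : Tendsto (fun x => deriv f (newtonMap f x) * deriv (deriv f) x /
      deriv f x ^ 2 / 2) (𝓝 γ) (𝓝 (deriv f γ * deriv (deriv f) γ / deriv f γ ^ 2 / 2)) :=
    (((hf'γ.tendsto.comp hN).mul hf''.tendsto).div (hf'γ.tendsto.pow 2)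
      (pow_ne_zero 2 hγ)).div_const 2
  have hslope := tendsto_div_sub_nhdsNE_of_hasDerivAt hf.self_of_nhds.hasDerivAt hf0
  refine HasDerivAt.lhopital_zero_nhdsNE (hderiv.filter_mono nhdsWithin_le_nhds)
    (Eventually.of_forall fun x => ((hasDerivAt_id x).sub_const γ).pow 2) ?_
    (hnum.mono_left nhdsWithin_le_nhds) (hden.mono_left nhdsWithin_le_nhds) ?_
  · filter_upwards [self_mem_nhdsWithin] with x hx
    simpa [sub_eq_zero] using hx
  · convert (hfactor.mono_left nhdsWithin_le_nhds).mul hslope using 2 with x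
    · simp only [id, Nat.cast_ofNat, div_eq_mul_inv, mul_inv]
      ring
    · field_simp

end Newton

theorem stmt_6_general (f : ℝ → ℝ) (D : Set ℝ) (hD : IsOpen D)
    (γ : ℝ) (hγ : γ ∈ D) (hf : ContDiffOn ℝ 2 f D)
    (hf0 : f γ = 0) (hf' : deriv f γ ≠ 0) :
    Tendsto (fun x => f (x - f x / deriv f x) / (x - γ) ^ 2) (𝓝[≠] γ)
      (𝓝 (iteratedDeriv 2 f γ / 2)) := by
  have hf1 : ContDiffOn ℝ 1 (deriv f) D := hf.deriv_of_isOpen hD le_rfl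
  have hdiff : ∀ᶠ x in 𝓝 γ, DifferentiableAt ℝ f x ∧ DifferentiableAt ℝ (deriv f) x :=
    hD.eventually_mem hγ |>.mono fun x hx =>
      ⟨(hf.contDiffAt (hD.mem_nhds hx)).differentiableAt two_ne_zero,
        (hf1.contDiffAt (hD.mem_nhds hx)).differentiableAt one_ne_zero⟩
  have hf2 : ContinuousAt (deriv (deriv f)) γ :=
    (hf1.continuousOn_deriv_of_isOpen hD le_rfl).continuousAt (hD.mem_nhds hγ)
  rw [iteratedDeriv_succ, iteratedDeriv_one]
  exact tendsto_comp_newtonMap_div_sq (hdiff.mono fun _ => And.left)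
    (hdiff.mono fun _ => And.right) hf2 hf0 hf'

/-- For a simple zero `γ` of a `C²` function `f` on an open interval `D`, and `N` the
Newton map, `f(N x)/(x - γ)² → f''(γ)/2` as `x → γ`, `x ≠ γ`. -/
theorem stmt_6 (f : ℝ → ℝ) (D : Set ℝ) (hD : IsOpen D) (hDconn : D.OrdConnected)
    (γ : ℝ) (hγ : γ ∈ D) (hf : ContDiffOn ℝ 2 f D)
    (hf0 : f γ = 0) (hf' : deriv f γ ≠ 0) :
    Tendsto (fun x => f (x - f x / deriv f x) / (x - γ) ^ 2) (𝓝[≠] γ)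
      (𝓝 (iteratedDeriv 2 f γ / 2)) :=
  stmt_6_general f D hD γ hγ hf hf0 hf'
end

section
/- Let f : ℝ → ℝ be three times continuously differentiable on an open interval D containing a point γ with f(γ) = 0 and f'(γ) ≠ 0, and let N(x) = x − f(x)/f'(x) be the Newton iteration map. Then the double Newton map N ∘ N satisfies (N(N(x)) − γ)/(x − γ)⁴ → (f''(γ)/(2·f'(γ)))³ as x → γ with x ≠ γ. In particular, the double Newton method x_{n+1} = N(N(x_n)) is fourth-order convergent. -/
open Filter Topology

/-!
Write the error of an iteration map `g` with fixed point `a` as `g x - a = φ x (x - a)^p`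
with `φ` continuous at `a`. Substituting one such factorisation into another shows that
composing maps of orders `p` and `q` gives order `p q` with constant `C K^p`. Newton's map
has order `2` with constant `f''(γ)/(2 f'(γ))`: its error is `(f'(x)(x - γ) - f(x)) / f'(x)`,
and L'Hôpital's rule gives the quadratic behaviour of the numerator.
-/

def HasOrderOfConvergence {𝕜 : Type*} [NormedField 𝕜] (g : 𝕜 → 𝕜) (a : 𝕜) (p : ℕ) (C : 𝕜) :
    Prop :=
  g a = a ∧ Tendsto (fun x => (g x - a) / (x - a) ^ p) (𝓝[≠] a) (𝓝 C)

namespace HasOrderOfConvergence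

variable {𝕜 : Type*} [NormedField 𝕜] {g h : 𝕜 → 𝕜} {a C K : 𝕜} {p q : ℕ}

theorem exists_continuousAt_eq_mul_pow (hg : HasOrderOfConvergence g a p C) (hp : p ≠ 0) :
    ∃ φ : 𝕜 → 𝕜, ContinuousAt φ a ∧ φ a = C ∧ ∀ x, g x - a = φ x * (x - a) ^ p := by
  classical
  refine ⟨Function.update (fun x => (g x - a) / (x - a) ^ p) a C,
    continuousAt_update_same.2 hg.2, Function.update_self .., fun x => ?_⟩
  rcases eq_or_ne x a with rfl | hx
  · simp [hg.1, hp]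
  · rw [Function.update_of_ne hx, div_mul_cancel₀ _ (pow_ne_zero p (sub_ne_zero.2 hx))]

theorem continuousAt (hg : HasOrderOfConvergence g a p C) (hp : p ≠ 0) : ContinuousAt g a := by
  obtain ⟨φ, hφ, -, hgφ⟩ := hg.exists_continuousAt_eq_mul_pow hp
  have hcont : ContinuousAt (fun x => φ x * (x - a) ^ p + a) a := by fun_prop
  simpa [← hgφ] using hcont

/-- Traub's composition theorem. -/
theorem comp (hg : HasOrderOfConvergence g a p C) (hh : HasOrderOfConvergence h a q K)
    (hp : p ≠ 0) (hq : q ≠ 0) : HasOrderOfConvergence (g ∘ h) a (p * q) (C * K ^ p) := by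
  obtain ⟨φ, hφ, hφa, hgφ⟩ := hg.exists_continuousAt_eq_mul_pow hp
  obtain ⟨ψ, hψ, hψa, hhψ⟩ := hh.exists_continuousAt_eq_mul_pow hq
  refine ⟨by simp [hh.1, hg.1], ?_⟩
  have hlim : ContinuousAt (fun x => φ (h x) * ψ x ^ p) a :=
    (hφ.comp_of_eq (hh.continuousAt hq) hh.1).mul (hψ.pow p)
  rw [ContinuousAt, hh.1, hφa, hψa] at hlim
  refine (hlim.mono_left nhdsWithin_le_nhds).congr' ?_
  filter_upwards [self_mem_nhdsWithin] with x (hx : x ≠ a)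
  have hx' : (x - a) ^ (p * q) ≠ 0 := pow_ne_zero _ (sub_ne_zero.2 hx)
  rw [Function.comp_apply, hgφ, hhψ, mul_pow, ← pow_mul', ← mul_assoc, mul_div_cancel_right₀ _ hx']

end HasOrderOfConvergence

theorem tendsto_deriv_mul_sub_div_sq {f f' f'' : ℝ → ℝ} {γ : ℝ}
    (hf : ∀ᶠ x in 𝓝 γ, HasDerivAt f (f' x) x) (hf' : ∀ᶠ x in 𝓝 γ, HasDerivAt f' (f'' x) x)
    (hf'' : ContinuousAt f'' γ) (hf0 : f γ = 0) :
    Tendsto (fun x => (f' x * (x - γ) - f x) / (x - γ) ^ 2) (𝓝[≠] γ) (𝓝 (f'' γ / 2)) := by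
  have hcont : ContinuousAt (fun x => f' x * (x - γ) - f x) γ :=
    ((hf'.self_of_nhds.continuousAt.mul (continuousAt_id.sub continuousAt_const)).sub
      hf.self_of_nhds.continuousAt)
  refine HasDerivAt.lhopital_zero_nhdsNE (f' := fun x => f'' x * (x - γ))
    (g' := fun x => 2 * (x - γ)) ?_ ?_ ?_ ?_ ?_ ?_
  · filter_upwards [nhdsWithin_le_nhds (hf.and hf')] with x ⟨hfx, hf'x⟩
    exact ((hf'x.mul ((hasDerivAt_id x).sub_const γ)).sub hfx).congr_deriv (by simp)
  · filter_upwards with x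
    exact (((hasDerivAt_id x).sub_const γ).pow 2).congr_deriv (by simp)
  · filter_upwards [self_mem_nhdsWithin] with x (hx : x ≠ γ)
    exact mul_ne_zero two_ne_zero (sub_ne_zero.2 hx)
  · simpa [hf0] using hcont.tendsto.mono_left nhdsWithin_le_nhds
  · have hsq : ContinuousAt (fun x => (x - γ) ^ 2) γ := by fun_prop
    simpa using hsq.tendsto.mono_left nhdsWithin_le_nhds
  · refine ((hf''.tendsto.mono_left nhdsWithin_le_nhds).div_const 2).congr' ?_
    filter_upwards [self_mem_nhdsWithin] with x (hx : x ≠ γ)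
    field_simp [sub_ne_zero.2 hx]

theorem hasOrderOfConvergence_newton {f f' f'' : ℝ → ℝ} {γ : ℝ}
    (hf : ∀ᶠ x in 𝓝 γ, HasDerivAt f (f' x) x) (hf' : ∀ᶠ x in 𝓝 γ, HasDerivAt f' (f'' x) x)
    (hf'' : ContinuousAt f'' γ) (hf0 : f γ = 0) (hf'0 : f' γ ≠ 0) :
    HasOrderOfConvergence (fun x => x - f x / f' x) γ 2 (f'' γ / (2 * f' γ)) := by
  refine ⟨by simp [hf0], ?_⟩
  have hinv : Tendsto (fun x => (f' x)⁻¹) (𝓝[≠] γ) (𝓝 (f' γ)⁻¹) :=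
    (hf'.self_of_nhds.continuousAt.tendsto.inv₀ hf'0).mono_left nhdsWithin_le_nhds
  have hlim := (tendsto_deriv_mul_sub_div_sq hf hf' hf'' hf0).mul hinv
  rw [show f'' γ / 2 * (f' γ)⁻¹ = f'' γ / (2 * f' γ) by field_simp] at hlim
  refine hlim.congr' ?_
  filter_upwards [nhdsWithin_le_nhds (hf'.self_of_nhds.continuousAt.eventually_ne hf'0)]
    with x hx
  field_simp
  ring

theorem stmt_7_general (f : ℝ → ℝ) (D : Set ℝ) (hD : IsOpen D)
    (γ : ℝ) (hγ : γ ∈ D) (hf : ContDiffOn ℝ 3 f D)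
    (hf0 : f γ = 0) (hf' : deriv f γ ≠ 0)
    (N : ℝ → ℝ) (hN : ∀ x, N x = x - f x / deriv f x) :
    Tendsto (fun x => (N (N x) - γ) / (x - γ) ^ 4) (𝓝[≠] γ)
      (𝓝 ((iteratedDeriv 2 f γ / (2 * deriv f γ)) ^ 3)) := by
  have hf₁ : ContDiffOn ℝ 2 (deriv f) D := hf.deriv_of_isOpen hD (by norm_num)
  have hf₂ : ContDiffOn ℝ 1 (deriv (deriv f)) D := hf₁.deriv_of_isOpen hD (by norm_num)
  have hderiv {g : ℝ → ℝ} {n : WithTop ℕ∞} (hg : ContDiffOn ℝ n g D) (hn : n ≠ 0) :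
      ∀ᶠ x in 𝓝 γ, HasDerivAt g (deriv g x) x := by
    filter_upwards [hD.mem_nhds hγ] with x hx
    exact ((hg.differentiableOn hn).differentiableAt (hD.mem_nhds hx)).hasDerivAt
  have hnewton := hasOrderOfConvergence_newton (hderiv hf (by norm_num))
    (hderiv hf₁ (by norm_num)) (hf₂.continuousOn.continuousAt (hD.mem_nhds hγ)) hf0 hf'
  rw [← funext hN] at hnewton
  rw [iteratedDeriv_succ, iteratedDeriv_one, pow_succ']
  exact (hnewton.comp hnewton two_ne_zero two_ne_zero).2

/-- The double Newton method is fourth-order convergent: for a simple zero `γ` of a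
`C³` function `f` on an open interval `D`, with `N x = x - f x / f' x`, one has
`(N(N x) - γ)/(x - γ)⁴ → (f''(γ)/(2 f'(γ)))³` as `x → γ`, `x ≠ γ`. -/
theorem stmt_7 (f : ℝ → ℝ) (D : Set ℝ) (hD : IsOpen D) (hDconn : D.OrdConnected)
    (γ : ℝ) (hγ : γ ∈ D) (hf : ContDiffOn ℝ 3 f D)
    (hf0 : f γ = 0) (hf' : deriv f γ ≠ 0)
    (N : ℝ → ℝ) (hN : ∀ x, N x = x - f x / deriv f x) :
    Tendsto (fun x => (N (N x) - γ) / (x - γ) ^ 4) (𝓝[≠] γ)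
      (𝓝 ((iteratedDeriv 2 f γ / (2 * deriv f γ)) ^ 3)) :=
  stmt_7_general f D hD γ hγ hf hf0 hf' N hN
end

section
/- Let γ be a simple zero (f(γ) = 0, f'(γ) ≠ 0) of a function f : ℝ → ℝ that is four times continuously differentiable on an open interval D containing γ. Define the M-4 iteration map by G(x) = y − f(y)/(2·((f(y) − f(x))/(y − x)) − f'(x)), where y = x − f(x)/f'(x). Then, writing c_m = f^{(m)}(γ)/m!, one has f(G(x))/(x − γ)⁴ → −(c₃·c₁ − c₂²)·c₂/c₁² as x → γ with x ≠ γ. -/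
/-! Write `e = x - γ`, `y` for the Newton point and `d = 2 [x, y] - f'(x)`. Taylor's theorem
(for `f` to order 3, for `f'` to order 2) gives `(y - γ) / e² → ε₀ := c₂ / c₁` and
`(d - c₁) / e² → δ₀ := 2 c₂ ε₀ - c₃`. As `(z - γ) d = (y - γ)(d - c₁) - c₂ (y - γ)² + o(e⁴)` for the
M-4 point `z`, this gives `(z - γ) / e⁴ → ε₀ (δ₀ - c₂ ε₀) / c₁ = c₂ (c₂² - c₁ c₃) / c₁³`, and
`f(z) ~ c₁ (z - γ)`. -/

open Filter Topology Asymptotics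

theorem exists_eventually_eq_add_mul_of_isLittleO {α : Type*} {l : Filter α} {u p g : α → ℝ}
    (h : (fun x => u x - p x) =o[l] g) :
    ∃ R : α → ℝ, Tendsto R l (𝓝 0) ∧ ∀ᶠ x in l, u x = p x + g x * R x := by
  obtain ⟨R, hR, huR⟩ := h.exists_eq_mul
  exact ⟨R, hR, huR.mono fun x hx => by simp only [Pi.mul_apply] at hx; linarith⟩

theorem isLittleO_pow_of_isLittleO_pow_succ {u : ℝ → ℝ} {n : ℕ} (a : ℝ)
    (h : (fun t => u t - a * t ^ (n + 1)) =o[𝓝 0] fun t => t ^ (n + 1)) :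
    u =o[𝓝 0] fun t => t ^ n :=
  ((h.trans (isLittleO_pow_pow (Nat.lt_add_one n))).add
    ((isLittleO_pow_pow (Nat.lt_add_one n)).const_mul_left a)).congr_left fun t => by ring

theorem tendsto_div_pow_nhds_zero_of_lt {u : ℝ → ℝ} {m n : ℕ} {a : ℝ} (hmn : m < n)
    (h : Tendsto (fun t => u t / t ^ n) (𝓝[≠] 0) (𝓝 a)) :
    Tendsto (fun t => u t / t ^ m) (𝓝[≠] 0) (𝓝 0) := by
  have hpow : Tendsto (fun t : ℝ => t ^ (n - m)) (𝓝[≠] 0) (𝓝 0) := by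
    simpa [zero_pow (Nat.sub_ne_zero_of_lt hmn)] using
      ((continuous_pow (n - m)).tendsto (0 : ℝ)).mono_left nhdsWithin_le_nhds
  have hlim : Tendsto (fun t => u t / t ^ n * t ^ (n - m)) (𝓝[≠] 0) (𝓝 0) := by
    simpa using h.mul hpow
  refine hlim.congr' ?_
  filter_upwards [self_mem_nhdsWithin] with t (ht : t ≠ 0)
  rw [← Nat.add_sub_cancel' hmn.le, pow_add, Nat.add_sub_cancel_left]
  field_simp

theorem isLittleO_sub_sum_iteratedDeriv {f : ℝ → ℝ} {s : Set ℝ} {x₀ : ℝ} {n : ℕ}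
    (hs : IsOpen s) (hx₀ : x₀ ∈ s) (hf : ContDiffOn ℝ n f s) :
    (fun x => f x - ∑ k ∈ Finset.range (n + 1), iteratedDeriv k f x₀ / k.factorial * (x - x₀) ^ k)
      =o[𝓝 x₀] fun x => (x - x₀) ^ n := by
  obtain ⟨r, hr, hball⟩ := Metric.isOpen_iff.mp hs x₀ hx₀
  have hx₀r := Metric.mem_ball_self (x := x₀) hr
  have h := taylor_isLittleO (convex_ball x₀ r) hx₀r (hf.mono hball)
  rw [Metric.isOpen_ball.nhdsWithin_eq hx₀r] at h
  refine h.congr_left fun x => ?_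
  rw [taylor_within_apply]
  congr 1
  refine Finset.sum_congr rfl fun k _ => ?_
  rw [iteratedDerivWithin_of_isOpen Metric.isOpen_ball hx₀r, smul_eq_mul]
  ring

noncomputable section

def newtonStep (φ φ' : ℝ → ℝ) (x : ℝ) : ℝ := x - φ x / φ' x

def m4Denom (φ φ' : ℝ → ℝ) (x : ℝ) : ℝ := 2 * slope φ x (newtonStep φ φ' x) - φ' x

def m4Step (φ φ' : ℝ → ℝ) (x : ℝ) : ℝ :=
  newtonStep φ φ' x - φ (newtonStep φ φ' x) / m4Denom φ φ' x

end

theorem m4Step_comp_add (φ φ' : ℝ → ℝ) (a t : ℝ) :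
    m4Step (fun s => φ (a + s)) (fun s => φ' (a + s)) t = m4Step φ φ' (a + t) - a := by
  have hy : newtonStep (fun s => φ (a + s)) (fun s => φ' (a + s)) t
      = newtonStep φ φ' (a + t) - a := by
    simp only [newtonStep]; ring
  simp only [m4Step, m4Denom, hy, slope_def_field, add_sub_cancel]
  ring

theorem tendsto_newtonStep_div_sq {φ φ' : ℝ → ℝ} {c₁ c₂ : ℝ} (hc₁ : c₁ ≠ 0)
    (hφ : (fun t => φ t - (c₁ * t + c₂ * t ^ 2)) =o[𝓝 0] fun t => t ^ 2)
    (hφ' : (fun t => φ' t - (c₁ + 2 * c₂ * t)) =o[𝓝 0] fun t => t) :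
    Tendsto (fun t => newtonStep φ φ' t / t ^ 2) (𝓝[≠] 0) (𝓝 (c₂ / c₁)) := by
  obtain ⟨R, hR, hφR⟩ := exists_eventually_eq_add_mul_of_isLittleO hφ
  obtain ⟨R', hR', hφ'R'⟩ := exists_eventually_eq_add_mul_of_isLittleO hφ'
  have hφ'c₁ : Tendsto φ' (𝓝 0) (𝓝 c₁) := by
    have h : Tendsto (fun t => c₁ + 2 * c₂ * t + t * R' t) (𝓝 0)
        (𝓝 (c₁ + 2 * c₂ * 0 + 0 * 0)) :=
      (tendsto_const_nhds.add (tendsto_id.const_mul _)).add (tendsto_id.mul hR')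
    simpa using h.congr' (hφ'R'.mono fun t ht => ht.symm)
  have hlim : Tendsto (fun t => (c₂ + (R' t - R t)) / φ' t) (𝓝 0) (𝓝 ((c₂ + (0 - 0)) / c₁)) :=
    (tendsto_const_nhds.add (hR'.sub hR)).div hφ'c₁ hc₁
  rw [sub_self, add_zero] at hlim
  refine (hlim.mono_left nhdsWithin_le_nhds).congr' ?_
  filter_upwards [nhdsWithin_le_nhds (hφR.and (hφ'R'.and (hφ'c₁.eventually_ne hc₁))),
    self_mem_nhdsWithin] with t ⟨hφt, hφ't, hne⟩ (ht : t ≠ 0)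
  rw [newtonStep, hφt]
  field_simp
  linear_combination -hφ't

theorem tendsto_m4Denom_sub_div_sq {φ φ' : ℝ → ℝ} {c₁ c₂ c₃ ε₀ : ℝ}
    (hφ : (fun t => φ t - (c₁ * t + c₂ * t ^ 2 + c₃ * t ^ 3)) =o[𝓝 0] fun t => t ^ 3)
    (hφ' : (fun t => φ' t - (c₁ + 2 * c₂ * t + 3 * c₃ * t ^ 2)) =o[𝓝 0] fun t => t ^ 2)
    (hε : Tendsto (fun t => newtonStep φ φ' t / t ^ 2) (𝓝[≠] 0) (𝓝 ε₀)) :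
    Tendsto (fun t => (m4Denom φ φ' t - c₁) / t ^ 2) (𝓝[≠] 0) (𝓝 (2 * c₂ * ε₀ - c₃)) := by
  obtain ⟨R, hR, hφR⟩ := exists_eventually_eq_add_mul_of_isLittleO hφ
  obtain ⟨R', hR', hφ'R'⟩ := exists_eventually_eq_add_mul_of_isLittleO hφ'
  set y := newtonStep φ φ' with hy_def
  have hq : Tendsto (fun t => y t / t) (𝓝[≠] 0) (𝓝 0) := by
    simpa using tendsto_div_pow_nhds_zero_of_lt (m := 1) (by norm_num) hε
  have hy : Tendsto y (𝓝[≠] 0) (𝓝 0) := by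
    simpa using tendsto_div_pow_nhds_zero_of_lt (m := 0) (by norm_num) hε
  -- for `t ≠ 0` this equals `(m4Denom φ φ' t - c₁) / t ^ 2`, by the three expansions
  have hlim : Tendsto (fun t => 2 * c₂ * (y t / t ^ 2) + 2 * c₃ * (y t / t) ^ 2 + 2 * c₃ * (y t / t)
      - c₃ + 2 * ((y t / t) ^ 3 * R (y t) - R t) / (y t / t - 1) - R' t) (𝓝[≠] 0)
      (𝓝 (2 * c₂ * ε₀ + 2 * c₃ * 0 ^ 2 + 2 * c₃ * 0 - c₃ + 2 * (0 ^ 3 * 0 - 0) / (0 - 1) - 0)) :=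
    ((((((hε.const_mul _).add ((hq.pow 2).const_mul _)).add (hq.const_mul _)).sub_const _).add
      (((((hq.pow 3).mul (hR.comp hy)).sub (hR.mono_left nhdsWithin_le_nhds)).const_mul _).div
        (hq.sub_const 1) (by norm_num : (0 : ℝ) - 1 ≠ 0))).sub (hR'.mono_left nhdsWithin_le_nhds))
  norm_num at hlim
  refine hlim.congr' ?_
  filter_upwards [hy.eventually hφR, nhdsWithin_le_nhds hφR, nhdsWithin_le_nhds hφ'R',
    (hq.sub_const 1).eventually_ne (by norm_num : (0 : ℝ) - 1 ≠ 0), self_mem_nhdsWithin]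
    with t hφy hφt hφ't hq1 (ht : t ≠ 0)
  have hyt : y t - t ≠ 0 := by
    contrapose! hq1
    rw [sub_eq_zero.mp hq1, div_self ht, sub_self]
  rw [m4Denom, ← hy_def, slope_def_field, hφy, hφt, hφ't]
  field_simp
  ring

theorem tendsto_m4Step_div_pow_four {φ φ' : ℝ → ℝ} {c₁ c₂ ε₀ δ₀ : ℝ} (hc₁ : c₁ ≠ 0)
    (hφ : (fun t => φ t - (c₁ * t + c₂ * t ^ 2)) =o[𝓝 0] fun t => t ^ 2)
    (hε : Tendsto (fun t => newtonStep φ φ' t / t ^ 2) (𝓝[≠] 0) (𝓝 ε₀))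
    (hδ : Tendsto (fun t => (m4Denom φ φ' t - c₁) / t ^ 2) (𝓝[≠] 0) (𝓝 δ₀)) :
    Tendsto (fun t => m4Step φ φ' t / t ^ 4) (𝓝[≠] 0) (𝓝 (ε₀ * (δ₀ - c₂ * ε₀) / c₁)) := by
  obtain ⟨R, hR, hφR⟩ := exists_eventually_eq_add_mul_of_isLittleO hφ
  set y := newtonStep φ φ' with hy_def
  set d := m4Denom φ φ' with hd_def
  have hy : Tendsto y (𝓝[≠] 0) (𝓝 0) := by
    simpa using tendsto_div_pow_nhds_zero_of_lt (m := 0) (by norm_num) hε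
  have hd : Tendsto d (𝓝[≠] 0) (𝓝 c₁) := by
    have h : Tendsto (fun t => c₁ + t ^ 2 * ((d t - c₁) / t ^ 2)) (𝓝[≠] 0) (𝓝 (c₁ + 0 ^ 2 * δ₀)) :=
      tendsto_const_nhds.add (((tendsto_id.pow 2).mono_left nhdsWithin_le_nhds).mul hδ)
    rw [zero_pow two_ne_zero, zero_mul, add_zero] at h
    refine h.congr' ?_
    filter_upwards [self_mem_nhdsWithin] with t (ht : t ≠ 0)
    field_simp
    ring
  have hlim : Tendsto (fun t => ((y t / t ^ 2) * ((d t - c₁) / t ^ 2) - c₂ * (y t / t ^ 2) ^ 2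
      - (y t / t ^ 2) ^ 2 * R (y t)) / d t) (𝓝[≠] 0)
      (𝓝 ((ε₀ * δ₀ - c₂ * ε₀ ^ 2 - ε₀ ^ 2 * 0) / c₁)) :=
    (((hε.mul hδ).sub ((hε.pow 2).const_mul _)).sub ((hε.pow 2).mul (hR.comp hy))).div hd hc₁
  rw [show (ε₀ * δ₀ - c₂ * ε₀ ^ 2 - ε₀ ^ 2 * 0) / c₁ = ε₀ * (δ₀ - c₂ * ε₀) / c₁ by ring] at hlim
  refine hlim.congr' ?_
  filter_upwards [hy.eventually hφR, hd.eventually_ne hc₁, self_mem_nhdsWithin]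
    with t hφy hdt (ht : t ≠ 0)
  rw [m4Step, ← hy_def, ← hd_def, hφy]
  field_simp
  ring

theorem tendsto_apply_m4Step_div_pow_four {φ φ' : ℝ → ℝ} {c₁ c₂ c₃ : ℝ} (hc₁ : c₁ ≠ 0)
    (hφ : (fun t => φ t - (c₁ * t + c₂ * t ^ 2 + c₃ * t ^ 3)) =o[𝓝 0] fun t => t ^ 3)
    (hφ' : (fun t => φ' t - (c₁ + 2 * c₂ * t + 3 * c₃ * t ^ 2)) =o[𝓝 0] fun t => t ^ 2) :
    Tendsto (fun t => φ (m4Step φ φ' t) / t ^ 4) (𝓝[≠] 0)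
      (𝓝 (c₂ * (c₂ ^ 2 - c₁ * c₃) / c₁ ^ 2)) := by
  have hφ₂ : (fun t => φ t - (c₁ * t + c₂ * t ^ 2)) =o[𝓝 0] fun t => t ^ 2 :=
    isLittleO_pow_of_isLittleO_pow_succ c₃ (hφ.congr_left fun t => by ring)
  have hφ₁ : (fun t => φ t - c₁ * t) =o[𝓝 0] fun t => t := by
    simpa using isLittleO_pow_of_isLittleO_pow_succ (n := 1) c₂ (hφ₂.congr_left fun t => by ring)
  have hφ'₁ : (fun t => φ' t - (c₁ + 2 * c₂ * t)) =o[𝓝 0] fun t => t := by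
    simpa using isLittleO_pow_of_isLittleO_pow_succ (n := 1) (3 * c₃)
      (hφ'.congr_left fun t => by ring)
  have hε := tendsto_newtonStep_div_sq hc₁ hφ₂ hφ'₁
  have hz := tendsto_m4Step_div_pow_four hc₁ hφ₂ hε (tendsto_m4Denom_sub_div_sq hφ hφ' hε)
  obtain ⟨R, hR, hφR⟩ := exists_eventually_eq_add_mul_of_isLittleO hφ₁
  have hz₀ : Tendsto (m4Step φ φ') (𝓝[≠] 0) (𝓝 0) := by
    simpa using tendsto_div_pow_nhds_zero_of_lt (m := 0) (by norm_num) hz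
  have hlim := hz.mul ((tendsto_const_nhds (x := c₁)).add (hR.comp hz₀))
  rw [show c₂ / c₁ * (2 * c₂ * (c₂ / c₁) - c₃ - c₂ * (c₂ / c₁)) / c₁ * (c₁ + 0)
    = c₂ * (c₂ ^ 2 - c₁ * c₃) / c₁ ^ 2 by field_simp; ring] at hlim
  refine hlim.congr' ?_
  filter_upwards [hz₀.eventually hφR] with t hφz
  rw [Function.comp_apply, hφz]
  ring

theorem tendsto_apply_m4Step_div_sub_pow_four {φ φ' : ℝ → ℝ} {a c₁ c₂ c₃ : ℝ} (hc₁ : c₁ ≠ 0)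
    (hφ : (fun x => φ x - (c₁ * (x - a) + c₂ * (x - a) ^ 2 + c₃ * (x - a) ^ 3))
      =o[𝓝 a] fun x => (x - a) ^ 3)
    (hφ' : (fun x => φ' x - (c₁ + 2 * c₂ * (x - a) + 3 * c₃ * (x - a) ^ 2))
      =o[𝓝 a] fun x => (x - a) ^ 2) :
    Tendsto (fun x => φ (m4Step φ φ' x) / (x - a) ^ 4) (𝓝[≠] a)
      (𝓝 (c₂ * (c₂ ^ 2 - c₁ * c₃) / c₁ ^ 2)) := by
  have ha : Tendsto (a + ·) (𝓝 0) (𝓝 a) := by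
    simpa using (continuous_const_add a).tendsto 0
  have h := tendsto_apply_m4Step_div_pow_four (φ := fun t => φ (a + t))
    (φ' := fun t => φ' (a + t)) (c₂ := c₂) (c₃ := c₃) hc₁
    (by simpa [Function.comp_def] using hφ.comp_tendsto ha)
    (by simpa [Function.comp_def] using hφ'.comp_tendsto ha)
  have hmap : map (a + ·) (𝓝[≠] 0) = 𝓝[≠] a := by
    rw [map_add_left_nhdsNE, add_zero]
  rw [← hmap, tendsto_map'_iff]
  convert h using 2 with t
  simp [m4Step_comp_add]

theorem stmt_9_general (f : ℝ → ℝ) (D : Set ℝ) (hD : IsOpen D)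
    (γ : ℝ) (hγ : γ ∈ D) (hf : ContDiffOn ℝ 4 f D)
    (hf0 : f γ = 0) (hf' : deriv f γ ≠ 0)
    (c : ℕ → ℝ) (hc : ∀ m, c m = iteratedDeriv m f γ / (Nat.factorial m))
    (G : ℝ → ℝ)
    (hG : ∀ x, G x =
      (x - f x / deriv f x) -
        f (x - f x / deriv f x) /
          (2 * ((f (x - f x / deriv f x) - f x) / ((x - f x / deriv f x) - x))
            - deriv f x)) :
    Tendsto (fun x => f (G x) / (x - γ) ^ 4) (𝓝[≠] γ)
      (𝓝 (-((c 3 * c 1 - (c 2) ^ 2) * c 2 / (c 1) ^ 2))) := by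
  have hc₀ : c 0 = 0 := by simp [hc, hf0]
  have hc₁ : c 1 = deriv f γ := by simp [hc]
  have hc' : ∀ k, iteratedDeriv k (deriv f) γ / k.factorial = (k + 1) * c (k + 1) := by
    intro k
    rw [hc, ← iteratedDeriv_succ', Nat.factorial_succ]
    push_cast
    field_simp
  have hTaylor := isLittleO_sub_sum_iteratedDeriv (n := 3) hD hγ (hf.of_le (by norm_num))
  have hTaylor' := isLittleO_sub_sum_iteratedDeriv (n := 2) hD hγ
    (hf.deriv_of_isOpen hD (by norm_num))
  have hG' : G = m4Step f (deriv f) := by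
    funext x
    rw [hG, m4Step, m4Denom, newtonStep, slope_def_field]
  rw [hG']
  convert tendsto_apply_m4Step_div_sub_pow_four (a := γ) (c₂ := c 2) (c₃ := c 3) (hc₁ ▸ hf')
    (hTaylor.congr_left fun x => ?_) (hTaylor'.congr_left fun x => ?_) using 2
  · ring
  · simp [Finset.sum_range_succ, ← hc, hc₀]
  · simp [Finset.sum_range_succ, hc', hc₁]
    ring

/-- For a simple zero `γ` of a `C⁴` function `f` on an open interval `D`, the M-4 map
`G` satisfies `f(G x)/(x - γ)⁴ → -((c₃ c₁ - c₂²) c₂ / c₁²)` as `x → γ`, `x ≠ γ`,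
where `c m = f⁽ᵐ⁾(γ)/m!`. -/
theorem stmt_9 (f : ℝ → ℝ) (D : Set ℝ) (hD : IsOpen D) (hDconn : D.OrdConnected)
    (γ : ℝ) (hγ : γ ∈ D) (hf : ContDiffOn ℝ 4 f D)
    (hf0 : f γ = 0) (hf' : deriv f γ ≠ 0)
    (c : ℕ → ℝ) (hc : ∀ m, c m = iteratedDeriv m f γ / (Nat.factorial m))
    (G : ℝ → ℝ)
    (hG : ∀ x, G x =
      (x - f x / deriv f x) -
        f (x - f x / deriv f x) /
          (2 * ((f (x - f x / deriv f x) - f x) / ((x - f x / deriv f x) - x))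
            - deriv f x)) :
    Tendsto (fun x => f (G x) / (x - γ) ^ 4) (𝓝[≠] γ)
      (𝓝 (-((c 3 * c 1 - (c 2) ^ 2) * c 2 / (c 1) ^ 2))) :=
  stmt_9_general f D hD γ hγ hf hf0 hf' c hc G hG
end
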